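/- Let V be a real inner product space, and let r ≥ 2, α > 0, δ ≥ 0 be real parameters, and let μ be a constant viscosity value with 0 < μ₋ ≤ μ ≤ μ₊. Define the Carreau–Yasuda map σ(τ) = μ (δ^α + ‖τ‖^α)^{(r−2)/α} τ. Then for all τ, η ∈ V one has the strong monotonicity bound ⟨σ(τ) − σ(η), τ − η⟩ ≥ σ_m (δ^r + ‖τ‖^r + ‖η‖^r)^{(r−2)/r} ‖τ − η‖², where σ_m = (μ₋/(r−1)) 2^{(−min(0,1/α−1/r)·(−1) − 1)(r−2) − 1}, i.e. σ_m = (μ₋/(r−1)) 2^{[−(1/α−1/r)⁻ − 1](r−2) − 1} with ξ⁻ = −min(0, ξ). -/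

import Mathlib

open scoped RealInnerProductSpace

/-!
Write `σ τ = f ‖τ‖ • τ` with `f s = μ (δ^α + s^α)^((r-2)/α)` nondecreasing. In the identity
`⟪c • x - d • y, x - y⟫ = (c + d)/2 ‖x - y‖² + (c - d)(‖x‖² - ‖y‖²)/2` the second term is then
nonnegative, so `⟪σ τ - σ η, τ - η⟫ ≥ f(m)/2 ‖τ - η‖²` with `m = max ‖τ‖ ‖η‖`. Since `δ`, `‖τ‖`
and `‖η‖` are all at most `N = (δ^α + m^α)^(1/α)`, we get
`(δ^r + ‖τ‖^r + ‖η‖^r)^((r-2)/r) ≤ 4^((r-2)/r) N^(r-2)`, and `N^(r-2) = f(m)/μ`. It remains to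
check that the stated constant is at most `μ₋ 4^(-(r-2)/r) / 2`, an inequality of exponents of `2`
that holds because `(1/α - 1/r)⁻ ≥ 0` and `r ≥ 2`.
-/

open Real Set

section RadialMaps

variable {V : Type*} [NormedAddCommGroup V] [InnerProductSpace ℝ V]

theorem inner_smul_sub_smul_sub (c d : ℝ) (x y : V) :
    ⟪c • x - d • y, x - y⟫ =
      (c + d) / 2 * ‖x - y‖ ^ 2 + (c - d) * (‖x‖ ^ 2 - ‖y‖ ^ 2) / 2 := by
  simp only [inner_sub_left, inner_sub_right, real_inner_smul_left, real_inner_self_eq_norm_sq,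
    norm_sub_sq_real, real_inner_comm x y]
  ring

theorem MonotoneOn.mul_norm_sub_sq_le_inner_smul_sub_smul {f : ℝ → ℝ}
    (hf : MonotoneOn f (Ici 0)) (hf₀ : 0 ≤ f 0) (x y : V) :
    f (max ‖x‖ ‖y‖) / 2 * ‖x - y‖ ^ 2 ≤ ⟪f ‖x‖ • x - f ‖y‖ • y, x - y⟫ := by
  have hx : (0 : ℝ) ≤ ‖x‖ := norm_nonneg x
  have hy : (0 : ℝ) ≤ ‖y‖ := norm_nonneg y
  have hf_nonneg : ∀ s, 0 ≤ s → 0 ≤ f s := fun s hs => hf₀.trans (hf self_mem_Ici hs hs)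
  have hcross : 0 ≤ (f ‖x‖ - f ‖y‖) * (‖x‖ ^ 2 - ‖y‖ ^ 2) := by
    rcases le_total ‖x‖ ‖y‖ with h | h
    · exact mul_nonneg_of_nonpos_of_nonpos (sub_nonpos.2 (hf hx hy h))
        (sub_nonpos.2 (pow_le_pow_left₀ hx h 2))
    · exact mul_nonneg (sub_nonneg.2 (hf hy hx h)) (sub_nonneg.2 (pow_le_pow_left₀ hy h 2))
  have hmax : f (max ‖x‖ ‖y‖) ≤ f ‖x‖ + f ‖y‖ := by
    rcases max_cases ‖x‖ ‖y‖ with ⟨h, -⟩ | ⟨h, -⟩ <;> rw [h] <;>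
      linarith [hf_nonneg _ hx, hf_nonneg _ hy]
  rw [inner_smul_sub_smul_sub]
  nlinarith [sq_nonneg ‖x - y‖]

end RadialMaps

section CarreauYasudaWeight

variable {δ α : ℝ}

theorem monotoneOn_rpow_add_rpow_rpow (hδ : 0 ≤ δ) (hα : 0 ≤ α) {e : ℝ} (he : 0 ≤ e) :
    MonotoneOn (fun s : ℝ => (δ ^ α + s ^ α) ^ e) (Ici 0) := fun _ hs _ _ hst =>
  rpow_le_rpow (add_nonneg (rpow_nonneg hδ α) (rpow_nonneg hs α))
    (add_le_add le_rfl (rpow_le_rpow hs hst hα)) he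

theorem le_rpow_add_rpow_rpow_inv {x y : ℝ} (hx : 0 ≤ x) (hy : 0 ≤ y) (hα : 0 < α) :
    x ≤ (x ^ α + y ^ α) ^ α⁻¹ :=
  (le_rpow_inv_iff_of_pos hx (add_nonneg (rpow_nonneg hx α) (rpow_nonneg hy α)) hα).2
    (le_add_of_nonneg_right (rpow_nonneg hy α))

theorem rpow_add_rpow_add_rpow_le {r q a b : ℝ} (hδ : 0 ≤ δ) (hα : 0 < α) (hr : 0 < r)
    (hq : 0 ≤ q) (ha : 0 ≤ a) (hb : 0 ≤ b) :
    (δ ^ r + a ^ r + b ^ r) ^ (q / r) ≤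
      (4 : ℝ) ^ (q / r) * (δ ^ α + max a b ^ α) ^ (q / α) := by
  set M := max a b
  have hM : 0 ≤ M := ha.trans (le_max_left a b)
  have hS : 0 ≤ δ ^ α + M ^ α := add_nonneg (rpow_nonneg hδ α) (rpow_nonneg hM α)
  set N := (δ ^ α + M ^ α) ^ α⁻¹
  have hMN : M ≤ N := by
    simpa only [N, add_comm (δ ^ α)] using le_rpow_add_rpow_rpow_inv hM hδ hα
  have hpow : ∀ s, 0 ≤ s → s ≤ N → s ^ r ≤ N ^ r := fun s hs hsN =>
    rpow_le_rpow hs hsN hr.le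
  have hsum : δ ^ r + a ^ r + b ^ r ≤ 4 * N ^ r := by
    linarith [hpow δ hδ (le_rpow_add_rpow_rpow_inv hδ hM hα),
      hpow a ha ((le_max_left a b).trans hMN), hpow b hb ((le_max_right a b).trans hMN),
      rpow_nonneg (rpow_nonneg hS α⁻¹) r]
  calc (δ ^ r + a ^ r + b ^ r) ^ (q / r)
      ≤ (4 * N ^ r) ^ (q / r) := by gcongr
    _ = (4 : ℝ) ^ (q / r) * (δ ^ α + M ^ α) ^ (q / α) := by
      rw [mul_rpow (by norm_num) (rpow_nonneg (rpow_nonneg hS _) _), ← rpow_mul (rpow_nonneg hS _),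
        ← rpow_mul hS]
      congr 2
      field_simp

end CarreauYasudaWeight

theorem carreau_yasuda_constant_mul_four_rpow_le {r α μm : ℝ} (hr : 2 ≤ r) (hμm : 0 ≤ μm) :
    μm / (r - 1) * (2 : ℝ) ^ ((min 0 (1 / α - 1 / r) - 1) * (r - 2) - 1) *
        (4 : ℝ) ^ ((r - 2) / r) ≤ μm / 2 := by
  set β := min 0 (1 / α - 1 / r)
  have hβ : β ≤ 0 := min_le_left _ _
  have hr₀ : 0 < r := by linarith
  have hexp : (β - 1) * (r - 2) - 1 + 2 * ((r - 2) / r) ≤ -1 := by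
    have hid : (β - 1) * (r - 2) + 2 * ((r - 2) / r) = -((r - 2) * ((1 - β) * r - 2) / r) := by
      field_simp
      ring
    have hnn : 0 ≤ (r - 2) * ((1 - β) * r - 2) / r :=
      div_nonneg (mul_nonneg (by linarith) (by nlinarith)) hr₀.le
    linarith
  have hpow : (2 : ℝ) ^ ((β - 1) * (r - 2) - 1) * (4 : ℝ) ^ ((r - 2) / r) ≤ 1 / 2 := by
    rw [show (4 : ℝ) = 2 ^ (2 : ℝ) by norm_num, ← rpow_mul (by norm_num), ← rpow_add two_pos]
    calc (2 : ℝ) ^ ((β - 1) * (r - 2) - 1 + 2 * ((r - 2) / r))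
        ≤ 2 ^ (-1 : ℝ) := rpow_le_rpow_of_exponent_le one_le_two hexp
      _ = 1 / 2 := by norm_num
  calc μm / (r - 1) * 2 ^ ((β - 1) * (r - 2) - 1) * 4 ^ ((r - 2) / r)
      = μm / (r - 1) * (2 ^ ((β - 1) * (r - 2) - 1) * 4 ^ ((r - 2) / r)) := by ring
    _ ≤ μm * (1 / 2) := by
      gcongr
      · exact div_le_self hμm (by linarith)
    _ = μm / 2 := by ring

theorem carreau_yasuda_strong_monotonicity
    {V : Type*} [NormedAddCommGroup V] [InnerProductSpace ℝ V]
    (r α δ μ μm : ℝ) (hr : 2 ≤ r) (hα : 0 < α) (hδ : 0 ≤ δ)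
    (hμm : 0 < μm) (hμ1 : μm ≤ μ)
    (σ : V → V)
    (hσ : ∀ τ : V, σ τ = (μ * (δ ^ α + ‖τ‖ ^ α) ^ ((r - 2) / α)) • τ) :
    ∀ τ η : V,
      (μm / (r - 1) * (2 : ℝ) ^ ((-(-(min 0 (1 / α - 1 / r))) - 1) * (r - 2) - 1)) *
          (δ ^ r + ‖τ‖ ^ r + ‖η‖ ^ r) ^ ((r - 2) / r) * ‖τ - η‖ ^ 2 ≤
        ⟪σ τ - σ η, τ - η⟫ := by
  intro τ η
  rw [neg_neg, hσ, hσ]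
  set F : ℝ → ℝ := fun s => (δ ^ α + s ^ α) ^ ((r - 2) / α)
  set σm := μm / (r - 1) * (2 : ℝ) ^ ((min 0 (1 / α - 1 / r) - 1) * (r - 2) - 1)
  have he : 0 ≤ (r - 2) / α := div_nonneg (by linarith) hα.le
  have hF : MonotoneOn F (Ici 0) := monotoneOn_rpow_add_rpow_rpow hδ hα.le he
  have hμ : 0 ≤ μ := hμm.le.trans hμ1
  have hσm : 0 ≤ σm := mul_nonneg (div_nonneg hμm.le (by linarith)) (rpow_nonneg zero_le_two _)
  have hμF : MonotoneOn (fun s => μ * F s) (Ici 0) := fun s hs t ht hst =>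
    mul_le_mul_of_nonneg_left (hF hs ht hst) hμ
  have hradial := hμF.mul_norm_sub_sq_le_inner_smul_sub_smul (by positivity) τ η
  calc σm * (δ ^ r + ‖τ‖ ^ r + ‖η‖ ^ r) ^ ((r - 2) / r) * ‖τ - η‖ ^ 2
      ≤ σm * ((4 : ℝ) ^ ((r - 2) / r) * F (max ‖τ‖ ‖η‖)) * ‖τ - η‖ ^ 2 := by
        gcongr
        exact rpow_add_rpow_add_rpow_le hδ hα (by linarith) (by linarith)
          (norm_nonneg τ) (norm_nonneg η)
    _ = σm * (4 : ℝ) ^ ((r - 2) / r) * F (max ‖τ‖ ‖η‖) * ‖τ - η‖ ^ 2 := by ring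
    _ ≤ μm / 2 * F (max ‖τ‖ ‖η‖) * ‖τ - η‖ ^ 2 := by
        gcongr
        exact carreau_yasuda_constant_mul_four_rpow_le hr hμm.le
    _ ≤ μ * F (max ‖τ‖ ‖η‖) / 2 * ‖τ - η‖ ^ 2 := by
        gcongr ?_ * _
        rw [mul_div_right_comm]
        gcongr
    _ ≤ _ := hradial
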